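/- arXiv:1211.5163 — 2 statements merged into one kernel-verified Lean document; each statement's English description precedes it below -/
import Mathlib

section
/- Let u : S × S → ℝ and suppose for each α ≥ 0 we have functions u^α : S × S → ℝ satisfying the 'resolvent derivative' identity ∫_S u^α(y,x) u^α(x,z) dm(x) = -d/dα u^α(y,z). Then for fixed points z_1,…,z_k ∈ S, summing over all permutations π of {1,…,k}, ∑_{π ∈ P_k} ∫_S u^α(x, z_{π(1)}) u^α(z_{π(1)}, z_{π(2)}) ⋯ u^α(z_{π(k-1)}, z_{π(k)}) u^α(z_{π(k)}, x) dm(x) = -∑_{π ∈ P_{k-1}} d/dα [ u^α(z_k, z_{π(1)}) u^α(z_{π(1)}, z_{π(2)}) ⋯ u^α(z_{π(k-1)}, z_k) ], where P_{k-1} permutes {1,…,k-1} and z_k is held fixed as the base point of the cycle. -/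
open MeasureTheory

/-- Product of a kernel `u` over the consecutive pairs of a list of points. -/
def chainProd {S : Type*} (u : S → S → ℝ) : List S → ℝ
  | [] => 1
  | [_] => 1
  | a :: b :: l => u a b * chainProd u (b :: l)

/-!
Integrating out the free point `x` closes each cyclic product at the edge
`z_{σ(k)} → x → z_{σ(1)}`, which the resolvent identity turns into minus the derivative of the
single kernel `u^α(z_{σ(k)}, z_{σ(1)})`: every term on the left is an open path product times
the derivative of its closing edge. On the right, the product rule writes the derivative of a
cyclic product through `z_k` as a sum over its `k` edges, i.e. over its `k` rotations with the
closing edge differentiated. The two sums match because every permutation of `{1, …, k}` is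
uniquely a permutation fixing `k` followed by a rotation.
-/

open Finset

section Cycle

variable {S M : Type*} [CommMonoid M] {n : ℕ}

def cycleProd (f : S → S → M) (w : Fin (n + 1) → S) : M :=
  ∏ i, f (w i) (w (i + 1))

theorem cycleProd_snoc (f : S → S → M) (c : Fin (n + 1) → S) (x : S) :
    cycleProd f (Fin.snoc c x : Fin (n + 2) → S) =
      (∏ j : Fin n, f (c j.castSucc) (c j.succ)) * (f (c (Fin.last n)) x * f x (c 0)) := by
  rw [cycleProd, Fin.prod_univ_castSucc, Fin.prod_univ_castSucc]
  simp only [Fin.coeSucc_eq_succ, Fin.last_add_one, Fin.snoc_castSucc, Fin.snoc_last,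
    Fin.succ_last, Fin.succ_castSucc]
  rw [← Fin.castSucc_zero, Fin.snoc_castSucc, mul_assoc]

end Cycle

section Chain

variable {S : Type*} (f : S → S → ℝ)

theorem chainProd_cons_ofFn (a : S) {k : ℕ} (c : Fin (k + 1) → S) :
    chainProd f (a :: List.ofFn c) = f a (c 0) * chainProd f (List.ofFn c) := by
  rw [List.ofFn_succ]; rfl

theorem chainProd_ofFn : ∀ {k : ℕ} (c : Fin (k + 1) → S),
    chainProd f (List.ofFn c) = ∏ i : Fin k, f (c i.castSucc) (c i.succ)
  | 0, c => rfl
  | k + 1, c => by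
    rw [List.ofFn_succ, chainProd_cons_ofFn, chainProd_ofFn, Fin.prod_univ_succ]
    rfl

theorem chainProd_last_cons_ofFn {k : ℕ} (w : Fin (k + 1) → S) :
    chainProd f (w (Fin.last k) :: List.ofFn w) = cycleProd f w := by
  rw [chainProd_cons_ofFn, chainProd_ofFn, cycleProd, Fin.prod_univ_castSucc, Fin.last_add_one,
    mul_comm]
  simp only [Fin.coeSucc_eq_succ]

theorem chainProd_cons_ofFn_append (x : S) {k : ℕ} (c : Fin k → S) :
    chainProd f (x :: (List.ofFn c ++ [x])) = cycleProd f (Fin.snoc c x : Fin (k + 1) → S) := by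
  rw [← chainProd_last_cons_ofFn, Fin.snoc_last, List.ofFn_succ']
  simp

end Chain

theorem Fin.prod_erase_eq_prod_castSucc_add {M : Type*} [CommMonoid M] {n : ℕ}
    (g : Fin (n + 1) → M) (i : Fin (n + 1)) :
    ∏ j ∈ univ.erase i, g j = ∏ j : Fin n, g (j.castSucc + (i + 1)) := by
  have hlast : (Equiv.addRight (i + 1)).toEmbedding (Fin.last n) = i := by
    simp [add_right_comm _ i]
  have herase : univ.erase (Fin.last n) = univ.map Fin.castSuccEmb := by
    ext j; simp [Fin.exists_castSucc_eq]
  conv_lhs => rw [← hlast, ← map_univ_equiv (Equiv.addRight (i + 1)), ← map_erase, herase,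
    prod_map, prod_map]
  rfl

section Deriv

variable {𝕜 S : Type*} [NontriviallyNormedField 𝕜] {n : ℕ}

noncomputable def closingEdgeTerm (F : 𝕜 → S → S → 𝕜) (α : 𝕜) (w : Fin (n + 1) → S) : 𝕜 :=
  (∏ j : Fin n, F α (w j.castSucc) (w j.succ)) * deriv (fun a => F a (w (Fin.last n)) (w 0)) α

theorem hasDerivAt_cycleProd (F : 𝕜 → S → S → 𝕜) (w : Fin (n + 1) → S) (α : 𝕜)
    (hF : ∀ i, DifferentiableAt 𝕜 (fun a => F a (w i) (w (i + 1))) α) :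
    HasDerivAt (fun a => cycleProd (F a) w)
      (∑ c, closingEdgeTerm F α fun r => w (r + c)) α := by
  refine (HasDerivAt.fun_finsetProd (u := univ) fun i _ => (hF i).hasDerivAt).congr_deriv ?_
  conv_rhs => rw [← Equiv.sum_comp (Equiv.addRight 1)]
  refine sum_congr rfl fun i _ => ?_
  have hlast : Fin.last n + (i + 1) = i := by rw [add_left_comm, Fin.last_add_one, add_zero]
  simp only [closingEdgeTerm, Fin.prod_erase_eq_prod_castSucc_add, smul_eq_mul,
    Equiv.coe_addRight, hlast, ← Fin.coeSucc_eq_succ, add_right_comm _ (1 : Fin (n + 1)),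
    zero_add]

end Deriv

theorem integral_cycleProd_snoc {S : Type*} [MeasurableSpace S] (m : Measure S)
    (F : ℝ → S → S → ℝ) (β : ℝ)
    (hres : ∀ y w : S, ∫ x, F β y x * F β x w ∂m = -deriv (fun a => F a y w) β) {n : ℕ}
    (c : Fin (n + 1) → S) :
    ∫ x, cycleProd (F β) (Fin.snoc c x : Fin (n + 2) → S) ∂m = -closingEdgeTerm F β c := by
  simp_rw [cycleProd_snoc]
  rw [integral_const_mul, hres, closingEdgeTerm, mul_neg]

def Equiv.Perm.castSucc {n : ℕ} (τ : Equiv.Perm (Fin n)) : Equiv.Perm (Fin (n + 1)) :=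
  (finSuccEquiv' (Fin.last n)).trans
    ((Equiv.optionCongr τ).trans (finSuccEquiv' (Fin.last n)).symm)

namespace Equiv.Perm

variable {n : ℕ} (τ : Perm (Fin n))

@[simp] theorem castSucc_apply_castSucc (j : Fin n) : τ.castSucc j.castSucc = (τ j).castSucc := by
  simp [Perm.castSucc, finSuccEquiv'_last_apply_castSucc]

@[simp] theorem castSucc_apply_last : τ.castSucc (Fin.last n) = Fin.last n := by
  simp [Perm.castSucc]

theorem castSucc_mul_addRight_injective :
    Function.Injective fun q : Perm (Fin n) × Fin (n + 1) =>
      q.1.castSucc * Equiv.addRight q.2 := by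
  rintro ⟨τ, c⟩ ⟨τ', c'⟩ h
  simp only at h
  -- the rotation is determined by the preimage of `last n`, which `τ.castSucc` fixes
  have hc : c' = c := by
    have h' := congr($h (Fin.last n - c))
    simp only [Perm.mul_apply, coe_addRight, sub_add_cancel, castSucc_apply_last] at h'
    have h'' := τ'.castSucc.injective (h'.symm.trans (castSucc_apply_last τ').symm)
    rwa [sub_add_eq_add_sub, sub_eq_iff_eq_add, add_left_cancel_iff] at h''
  subst hc
  have hτ : τ.castSucc = τ'.castSucc := mul_right_cancel h
  refine Prod.ext (Equiv.ext fun j => Fin.castSucc_injective _ ?_) rfl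
  simpa using congr($hτ j.castSucc)

theorem castSucc_mul_addRight_bijective :
    Function.Bijective fun q : Perm (Fin n) × Fin (n + 1) =>
      q.1.castSucc * Equiv.addRight q.2 := by
  refine (Fintype.bijective_iff_injective_and_card _).2 ⟨castSucc_mul_addRight_injective, ?_⟩
  simp [Fintype.card_perm, Nat.factorial_succ, mul_comm]

end Equiv.Perm

theorem cyclic_sum_eq_neg_deriv_general {S : Type*} [MeasurableSpace S] (m : Measure S)
    (n : ℕ) (u : ℝ → S → S → ℝ) (z : Fin (n + 1) → S) (α : ℝ)
    (hres : ∀ (β : ℝ) (y w : S),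
      (∫ x, u β y x * u β x w ∂m) = - deriv (fun a => u a y w) β)
    (hdiff : ∀ y w : S, DifferentiableAt ℝ (fun a => u a y w) α) :
    ∑ σ : Equiv.Perm (Fin (n + 1)),
        ∫ x, chainProd (u α) (x :: (List.ofFn (fun j => z (σ j)) ++ [x])) ∂m
      = - ∑ σ : Equiv.Perm (Fin n),
          deriv (fun a => chainProd (u a)
            (z (Fin.last n) ::
              (List.ofFn (fun j => z ((σ j).castSucc)) ++ [z (Fin.last n)]))) α := by
  have hcycle : ∀ τ : Equiv.Perm (Fin n),
      (Fin.snoc (fun j => z (τ j).castSucc) (z (Fin.last n)) : Fin (n + 1) → S) =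
        fun r => z (τ.castSucc r) :=
    fun τ => funext <| Fin.lastCases (by simp) (by simp)
  calc _ = ∑ σ : Equiv.Perm (Fin (n + 1)), -closingEdgeTerm u α fun r => z (σ r) := by
        simp_rw [chainProd_cons_ofFn_append, integral_cycleProd_snoc m u α (hres α)]
    _ = ∑ q : Equiv.Perm (Fin n) × Fin (n + 1),
          -closingEdgeTerm u α fun r => z (q.1.castSucc (r + q.2)) :=
        (Equiv.sum_comp (.ofBijective _ Equiv.Perm.castSucc_mul_addRight_bijective)
          fun σ => -closingEdgeTerm u α fun r => z (σ r)).symm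
    _ = _ := by
        simp_rw [Fintype.sum_prod_type, sum_neg_distrib, chainProd_cons_ofFn_append, hcycle,
          (hasDerivAt_cycleProd u _ α fun _ => hdiff _ _).deriv]

/-- If the kernels `u^α` satisfy the resolvent-derivative identity
`∫ u^α(y,x) u^α(x,z) dm(x) = -(d/dα) u^α(y,z)`, then the sum over all
permutations `π` of cyclic products `∫ u^α(x,z_{π(1)}) ⋯ u^α(z_{π(k)},x) dm(x)`
equals minus the derivative in `α` of the sum over permutations fixing the base
point `z_k` of cyclic products through `z_k`.  Here `k = n+1`, the base point is
`z (Fin.last n)`. -/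
theorem cyclic_sum_eq_neg_deriv {S : Type*} [MeasurableSpace S] (m : Measure S)
    (n : ℕ) (u : ℝ → S → S → ℝ) (z : Fin (n + 1) → S) (α : ℝ)
    (hres : ∀ (β : ℝ) (y w : S),
      (∫ x, u β y x * u β x w ∂m) = - deriv (fun a => u a y w) β)
    (hdiff : ∀ y w : S, DifferentiableAt ℝ (fun a => u a y w) α)
    (hint : ∀ (β : ℝ) (σ : Equiv.Perm (Fin (n + 1))),
      Integrable (fun x =>
        chainProd (u β) (x :: (List.ofFn (fun j => z (σ j)) ++ [x]))) m) :
    ∑ σ : Equiv.Perm (Fin (n + 1)),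
        ∫ x, chainProd (u α) (x :: (List.ofFn (fun j => z (σ j)) ++ [x])) ∂m
      = - ∑ σ : Equiv.Perm (Fin n),
          deriv (fun a => chainProd (u a)
            (z (Fin.last n) ::
              (List.ofFn (fun j => z ((σ j).castSucc)) ++ [z (Fin.last n)]))) α :=
  cyclic_sum_eq_neg_deriv_general m n u z α hres hdiff
end

section
/- (Invariance implies rotation formula.) Let μ be a measure on Ω invariant under each loop rotation ρ_u (u > 0), let ζ : Ω → (0,∞] be ρ_u-invariant, and let T ≥ 0 be a 'unit weight', i.e. ∫_0^{ζ(ω)} T(ρ_u ω) du = 1 for μ-a.e. ω with ζ(ω) < ∞. Then for every ρ-invariant measurable F ≥ 0 with μ concentrated on {ζ < ∞}, μ(F/ζ) = μ(T · F); equivalently μ(F) = μ(T F ζ) when μ(F) = μ(F/ζ · ζ). -/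
open MeasureTheory
open scoped ENNReal

/-- Invariance implies rotation formula: if `μ` is invariant under each loop
rotation `ρ_u`, `ζ` is `ρ`-invariant with values in `(0,∞]`, `μ` is concentrated
on `{ζ < ∞}`, and `T ≥ 0` is a unit weight (`∫_0^ζ T(ρ_u ω) du = 1` a.e.), then
for every nonnegative `ρ`-invariant measurable `F`, `μ(F/ζ) = μ(T·F)`. -/
theorem unit_weight_formula {Ω : Type*} [MeasurableSpace Ω] (μ : Measure Ω)
    [SigmaFinite μ] (ρ : ℝ → Ω → Ω) (ζ : Ω → ℝ≥0∞) (hζm : Measurable ζ)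
    (hζpos : ∀ ω, 0 < ζ ω)
    (hinv : ∀ u : ℝ, 0 < u → MeasurePreserving (ρ u) μ μ)
    (hζinv : ∀ u : ℝ, 0 < u → ∀ ω, ζ (ρ u ω) = ζ ω)
    (T : Ω → ℝ≥0∞) (hTmeas : Measurable T)
    (hTjoint : Measurable fun p : ℝ × Ω => T (ρ p.1 p.2))
    (hT : ∀ᵐ ω ∂μ, ζ ω < ⊤ →
      (∫⁻ u in Set.Ioo 0 ((ζ ω).toReal), T (ρ u ω)) = 1)
    (F : Ω → ℝ≥0∞) (hFm : Measurable F)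
    (hFinv : ∀ u : ℝ, 0 < u → ∀ ω, F (ρ u ω) = F ω)
    (hfin : μ {ω | ζ ω = ⊤} = 0) :
    (∫⁻ ω, F ω / ζ ω ∂μ) = ∫⁻ ω, T ω * F ω ∂μ := by
  have hae : ∀ᵐ ω ∂μ, ζ ω < ⊤ := by
    rw [ae_iff]
    simpa [not_lt, top_le_iff] using hfin
  set ind : ℝ → Ω → ℝ≥0∞ := fun u ω =>
    (Set.Ioo (0:ℝ) ((ζ ω).toReal)).indicator (fun _ => (1:ℝ≥0∞)) u with hind
  have hSmeas : MeasurableSet {p : ℝ × Ω | 0 < p.1 ∧ p.1 < (ζ p.2).toReal} := by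
    apply MeasurableSet.inter
    · exact measurableSet_lt measurable_const measurable_fst
    · exact measurableSet_lt measurable_fst
        ((ENNReal.measurable_toReal.comp hζm).comp measurable_snd)
  have hindmeas : Measurable fun p : ℝ × Ω => ind p.1 p.2 := by
    have : (fun p : ℝ × Ω => ind p.1 p.2) =
        Set.indicator {p : ℝ × Ω | 0 < p.1 ∧ p.1 < (ζ p.2).toReal}
          (fun _ => (1:ℝ≥0∞)) := by
      ext p
      by_cases h : 0 < p.1 ∧ p.1 < (ζ p.2).toReal
      · simp [hind, Set.indicator, Set.mem_Ioo, h]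
      · simp [hind, Set.indicator, Set.mem_Ioo, h]
    rw [this]
    exact Measurable.indicator measurable_const hSmeas
  have hfmeas : Measurable fun p : ℝ × Ω =>
      ind p.1 p.2 * (F p.2 / ζ p.2 * T (ρ p.1 p.2)) :=
    hindmeas.mul (((hFm.comp measurable_snd).div (hζm.comp measurable_snd)).mul hTjoint)
  have hgmeas : Measurable fun p : ℝ × Ω =>
      ind p.1 p.2 * (F p.2 / ζ p.2 * T p.2) :=
    hindmeas.mul (((hFm.comp measurable_snd).div (hζm.comp measurable_snd)).mul
      (hTmeas.comp measurable_snd))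
  calc ∫⁻ ω, F ω / ζ ω ∂μ
      = ∫⁻ ω, (∫⁻ u in Set.Ioo (0:ℝ) ((ζ ω).toReal), F ω / ζ ω * T (ρ u ω)) ∂μ := by
        refine lintegral_congr_ae ?_
        filter_upwards [hT, hae] with ω h1 h2
        have hm : Measurable fun u : ℝ => T (ρ u ω) :=
          hTjoint.comp (measurable_id.prodMk measurable_const)
        rw [lintegral_const_mul _ hm, h1 h2, mul_one]
    _ = ∫⁻ ω, (∫⁻ u : ℝ, ind u ω * (F ω / ζ ω * T (ρ u ω))) ∂μ := by
        refine lintegral_congr fun ω => ?_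
        rw [← lintegral_indicator measurableSet_Ioo]
        refine lintegral_congr fun u => ?_
        by_cases h : u ∈ Set.Ioo (0:ℝ) ((ζ ω).toReal)
        · simp [hind, Set.indicator, Set.mem_Ioo.1 h]
        · simp only [hind, Set.indicator]
          simp [Set.mem_Ioo.not.1 h, h]
    _ = ∫⁻ u : ℝ, ∫⁻ ω, ind u ω * (F ω / ζ ω * T (ρ u ω)) ∂μ := by
        exact lintegral_lintegral_swap (hfmeas.comp measurable_swap).aemeasurable
    _ = ∫⁻ u : ℝ, ∫⁻ ω, ind u ω * (F ω / ζ ω * T ω) ∂μ := by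
        refine lintegral_congr fun u => ?_
        rcases le_or_gt u 0 with hu | hu
        · refine lintegral_congr fun ω => ?_
          have h1 : ¬ (0 < u) := not_lt.2 hu
          simp [hind, Set.indicator, Set.mem_Ioo, h1]
        · have hcomp := (hinv u hu).lintegral_comp
            (f := fun ω => ind u ω * (F ω / ζ ω * T ω))
            (hgmeas.comp (measurable_const.prodMk measurable_id))
          rw [← hcomp]
          refine lintegral_congr fun ω => ?_
          simp only [hind, hζinv u hu, hFinv u hu]
    _ = ∫⁻ ω, (∫⁻ u : ℝ, ind u ω * (F ω / ζ ω * T ω)) ∂μ := by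
        exact lintegral_lintegral_swap hgmeas.aemeasurable
    _ = ∫⁻ ω, T ω * F ω ∂μ := by
        refine lintegral_congr_ae ?_
        filter_upwards [hae] with ω h2
        have hm : Measurable fun u : ℝ => ind u ω :=
          hindmeas.comp (measurable_id.prodMk measurable_const)
        rw [lintegral_mul_const _ hm]
        have hint : (∫⁻ u : ℝ, ind u ω) = ζ ω := by
          simp only [hind]
          rw [lintegral_indicator measurableSet_Ioo]
          simp [Real.volume_Ioo, ENNReal.ofReal_toReal h2.ne]
        rw [hint]
        have : ζ ω * (F ω / ζ ω * T ω) = T ω * (F ω / ζ ω * ζ ω) := by ring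
        rw [this, ENNReal.div_mul_cancel (hζpos ω).ne' h2.ne]
end
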